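/- Let Ω be a nonempty finite type with probability weights p : Ω → ℝ (p ω > 0 for all ω, ∑_ω p ω = 1), ξ : Ω → (ι → ℝ), and let Θ̃ be concave on a convex set S ⊆ (ι → ℝ) containing the range of ξ. If a partition 𝒫' of Ω refines a partition 𝒫, then the partition upper bounds satisfy ∑_{C ∈ 𝒫'.parts} P(C) · Θ̃(μ_C) ≤ ∑_{C ∈ 𝒫.parts} P(C) · Θ̃(μ_C). -/

import Mathlib

/-!
Each block `D` of the coarse partition is the disjoint union of the blocks of the fine partition
it contains, and the conditional mean `μ_D` is the `P(C)`-weighted average of the means `μ_C` of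
those blocks. Jensen's inequality for the concave `Θ̃` therefore gives
`∑_{C ⊆ D} P(C) Θ̃(μ_C) ≤ P(D) Θ̃(μ_D)`; summing over `D` proves the claim.
-/

open Finset

namespace Finpartition

variable {α M : Type*} [DecidableEq α] [AddCommMonoid M] {s : Finset α}

theorem sum_sum_parts (P : Finpartition s) (f : α → M) :
    ∑ t ∈ P.parts, ∑ a ∈ t, f a = ∑ a ∈ s, f a := by
  conv_rhs => rw [← P.biUnion_parts]
  exact (sum_biUnion P.disjoint).symm

theorem sum_parts_eq_sum_sum_inter_of_le {P Q : Finpartition s} (h : P ≤ Q)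
    (f : Finset α → M) (hf : f ∅ = 0) :
    ∑ t ∈ P.parts, f t = ∑ u ∈ Q.parts, ∑ t ∈ P.parts, f (t ∩ u) := by
  rw [sum_comm]
  refine sum_congr rfl fun t ht ↦ ?_
  obtain ⟨u, hu, htu⟩ := h ht
  rw [sum_eq_single_of_mem u hu, inter_eq_left.2 htu]
  intro v hv hvu
  have htv : Disjoint t v := (Q.disjoint hu hv hvu.symm).mono_left htu
  rw [disjoint_iff_inter_eq_empty.1 htv, hf]

end Finpartition

section CenterMass

variable {𝕜 E α : Type*} [Field 𝕜] [AddCommGroup E] [Module 𝕜 E] [DecidableEq α]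
  {s : Finset α} {w : α → 𝕜} {z : α → E}

theorem Finpartition.centerMass_centerMass_parts (P : Finpartition s)
    (hw : ∀ t ∈ P.parts, ∑ a ∈ t, w a ≠ 0) :
    P.parts.centerMass (fun t ↦ ∑ a ∈ t, w a) (fun t ↦ t.centerMass w z) = s.centerMass w z := by
  have hblock : ∀ t ∈ P.parts, (∑ a ∈ t, w a) • t.centerMass w z = ∑ a ∈ t, w a • z a :=
    fun t ht ↦ smul_inv_smul₀ (hw t ht) _
  rw [centerMass, sum_congr rfl hblock, P.sum_sum_parts, P.sum_sum_parts, centerMass]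

variable [LinearOrder 𝕜] [IsStrictOrderedRing 𝕜]

theorem ConcaveOn.sum_parts_mul_le {S : Set E} {Θ : E → 𝕜} (hΘ : ConcaveOn 𝕜 S Θ)
    (hw : ∀ a ∈ s, 0 < w a) (hz : ∀ a ∈ s, z a ∈ S) (P : Finpartition s) :
    ∑ t ∈ P.parts, (∑ a ∈ t, w a) * Θ (t.centerMass w z) ≤
      (∑ a ∈ s, w a) * Θ (s.centerMass w z) := by
  rcases s.eq_empty_or_nonempty with rfl | hs
  · simp [P.parts_eq_empty_iff.2 rfl]
  have hpos : ∀ t ∈ P.parts, 0 < ∑ a ∈ t, w a := fun t ht ↦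
    sum_pos (fun a ha ↦ hw a (P.subset ht ha)) (P.nonempty_of_mem_parts ht)
  have hmean : ∀ t ∈ P.parts, t.centerMass w z ∈ S := fun t ht ↦
    hΘ.1.centerMass_mem (fun a ha ↦ (hw a (P.subset ht ha)).le) (hpos t ht)
      fun a ha ↦ hz a (P.subset ht ha)
  have hmass : 0 < ∑ a ∈ s, w a := sum_pos hw hs
  have htotal : 0 < ∑ t ∈ P.parts, ∑ a ∈ t, w a := P.sum_sum_parts w ▸ hmass
  calc ∑ t ∈ P.parts, (∑ a ∈ t, w a) * Θ (t.centerMass w z)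
      = (∑ a ∈ s, w a) *
          P.parts.centerMass (fun t ↦ ∑ a ∈ t, w a) (Θ ∘ fun t ↦ t.centerMass w z) := by
        rw [centerMass, ← P.sum_sum_parts w, smul_eq_mul, mul_inv_cancel_left₀ htotal.ne']
        rfl
    _ ≤ (∑ a ∈ s, w a) * Θ (s.centerMass w z) := by
        rw [← P.centerMass_centerMass_parts fun t ht ↦ (hpos t ht).ne']
        exact mul_le_mul_of_nonneg_left
          (hΘ.le_map_centerMass (fun t ht ↦ (hpos t ht).le) htotal hmean) hmass.le

end CenterMass

theorem refinement_tightens_upper_bound_general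
    {Ω ι : Type*} [Fintype Ω] [DecidableEq Ω]
    (p : Ω → ℝ) (hp : ∀ ω, 0 < p ω)
    (ξ : Ω → ι → ℝ) (S : Set (ι → ℝ))
    (hξS : ∀ ω, ξ ω ∈ S)
    (Θt : (ι → ℝ) → ℝ) (hΘt : ConcaveOn ℝ S Θt)
    (Pt Pt' : Finpartition (Finset.univ : Finset Ω)) (href : Pt' ≤ Pt) :
    ∑ C ∈ Pt'.parts,
        (∑ ω ∈ C, p ω) * Θt ((∑ ω ∈ C, p ω)⁻¹ • ∑ ω ∈ C, p ω • ξ ω) ≤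
      ∑ C ∈ Pt.parts,
        (∑ ω ∈ C, p ω) * Θt ((∑ ω ∈ C, p ω)⁻¹ • ∑ ω ∈ C, p ω • ξ ω) := by
  set F : Finset Ω → ℝ := fun C ↦ (∑ ω ∈ C, p ω) * Θt (C.centerMass p ξ)
  refine (Pt'.sum_parts_eq_sum_sum_inter_of_le href F (by simp [F])).trans_le
    (sum_le_sum fun D hD ↦ ?_)
  exact (Pt'.sum_restrict (Pt.subset hD) F (by simp [F])).symm.trans_le
    (hΘt.sum_parts_mul_le (fun ω _ ↦ hp ω) (fun ω _ ↦ hξS ω) _)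

/-- Corollary 3 of the paper: refining a partition yields a (penalized)
mean-value upper bound that is at least as tight. `Pt' ≤ Pt` is the refinement
order on `Finpartition`. -/
theorem refinement_tightens_upper_bound
    {Ω ι : Type*} [Fintype Ω] [DecidableEq Ω] [Nonempty Ω] [Fintype ι]
    (p : Ω → ℝ) (hp : ∀ ω, 0 < p ω) (hsum : ∑ ω, p ω = 1)
    (ξ : Ω → ι → ℝ) (S : Set (ι → ℝ)) (hS : Convex ℝ S)
    (hξS : ∀ ω, ξ ω ∈ S)
    (Θt : (ι → ℝ) → ℝ) (hΘt : ConcaveOn ℝ S Θt)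
    (Pt Pt' : Finpartition (Finset.univ : Finset Ω)) (href : Pt' ≤ Pt) :
    ∑ C ∈ Pt'.parts,
        (∑ ω ∈ C, p ω) * Θt ((∑ ω ∈ C, p ω)⁻¹ • ∑ ω ∈ C, p ω • ξ ω) ≤
      ∑ C ∈ Pt.parts,
        (∑ ω ∈ C, p ω) * Θt ((∑ ω ∈ C, p ω)⁻¹ • ∑ ω ∈ C, p ω • ξ ω) :=
  refinement_tightens_upper_bound_general p hp ξ S hξS Θt hΘt Pt Pt' href
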